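/- arXiv:0805.4307 — 3 statements merged into one kernel-verified Lean document; each statement's English description precedes it below -/
import Mathlib

section
/- For all histories H, H' one has ‖Λ(H) − Λ(H')‖ ≤ d(H,H') + ‖G(0)(H(0) − H'(0))‖. Consequently, if d(H,H') = 0 and H(0) = H'(0) — in particular if H and H' are equivalent — then σ(H) = σ(H'), z(H) = z(H') and 𝒮(H) = 𝒮(H'): two equivalent histories determine the same macroscopic stress, substructural self-action and microstress. -/
open MeasureTheory Filter Topology
open scoped ENNReal Classical

noncomputable section

/-- The state space `V = M₃ₓ₃(ℝ) × ℝᵏ × M_{k×3}(ℝ)`, each factor Euclidean. -/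
abbrev V (k : ℕ) :=
  EuclideanSpace ℝ (Fin 3 × Fin 3) × EuclideanSpace ℝ (Fin k) ×
    EuclideanSpace ℝ (Fin k × Fin 3)

/-- The norm `‖v‖ := |v_W| + |v_ν| + |v_N|`. -/
def vnorm {k : ℕ} (v : V k) : ℝ := ‖v.1‖ + ‖v.2.1‖ + ‖v.2.2‖

/-- The inner product of the Euclidean factors. -/
def vinner {k : ℕ} (v w : V k) : ℝ :=
  (inner ℝ v.1 w.1 : ℝ) + (inner ℝ v.2.1 w.2.1 : ℝ) + (inner ℝ v.2.2 w.2.2 : ℝ)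

/-- The operator norm on `End(V)` corresponding to `vnorm`. -/
def opnorm {k : ℕ} (A : V k →L[ℝ] V k) : ℝ :=
  sSup ((fun v => vnorm (A v)) '' {v : V k | vnorm v ≤ 1})

/-- A history: a bounded, right-continuous map `[0,∞) → V` of bounded variation. -/
structure IsHistory {k : ℕ} (H : ℝ → V k) : Prop where
  bounded : ∃ C : ℝ, ∀ s : ℝ, 0 ≤ s → vnorm (H s) ≤ C
  rightCont : ∀ s : ℝ, 0 ≤ s → ContinuousWithinAt H (Set.Ici s) s
  bv : BoundedVariationOn H (Set.Ici 0)

/-- The relaxation function `G` is absolutely continuous with Bochner-integrable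
derivative `G'` on `[0,∞)`. -/
structure IsRelaxation {k : ℕ} (G G' : ℝ → (V k →L[ℝ] V k)) : Prop where
  integrable : IntegrableOn G' (Set.Ici 0)
  ftc : ∀ t : ℝ, 0 ≤ t → G t = G 0 + ∫ s in Set.Icc (0:ℝ) t, G' s

/-- The distance `d(H,H') := sup_{t>0} ‖∫₀^∞ Ġ(s+t)(H(s) − H'(s)) ds‖`. -/
def hdist {k : ℕ} (G' : ℝ → (V k →L[ℝ] V k)) (H H' : ℝ → V k) : ℝ≥0∞ :=
  ⨆ t : Set.Ioi (0:ℝ), ENNReal.ofReal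
    (vnorm (∫ s in Set.Ioi (0:ℝ), (G' (s + (t:ℝ))) (H s - H' s)))

/-- The response functional `Λ(H) := G(0)H(0) + ∫₀^∞ Ġ(s)H(s) ds`. -/
def response {k : ℕ} (G G' : ℝ → (V k →L[ℝ] V k)) (H : ℝ → V k) : V k :=
  (G 0) (H 0) + ∫ s in Set.Ioi (0:ℝ), (G' s) (H s)

/-- The prolongation `K_p∗H` of a history `H` by a process `K` of duration `p`. -/
def prolong {k : ℕ} (p : ℝ) (K H : ℝ → V k) : ℝ → V k :=
  fun s => if s < p then K s else H (s - p)

/-- `K` (of duration `p`) prolongs `H`: `lim_{s↗p} K(s) = H(0)`. -/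
def Prolongs {k : ℕ} (p : ℝ) (K H : ℝ → V k) : Prop :=
  Tendsto K (𝓝[<] p) (𝓝 (H 0))

/-- Equivalence of histories: same initial value and equal responses under every
prolongation. -/
def EquivHist {k : ℕ} (G G' : ℝ → (V k →L[ℝ] V k)) (H H' : ℝ → V k) : Prop :=
  H 0 = H' 0 ∧ ∀ p : ℝ, 0 < p → ∀ K : ℝ → V k, Prolongs p K H →
    response G G' (prolong p K H) = response G G' (prolong p K H')

/-- The shifted history `Hˢ(u) := H(s+u)`. -/
def shift {k : ℕ} (H : ℝ → V k) (s : ℝ) : ℝ → V k := fun u => H (s + u)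

/-- The work density `w(H) := ∫₀^∞ ⟨Λ(Hˢ), Ḣ(s)⟩ ds` of a differentiable history
`H` with derivative `Hd`. -/
def work {k : ℕ} (G G' : ℝ → (V k →L[ℝ] V k)) (H Hd : ℝ → V k) : ℝ :=
  ∫ s in Set.Ioi (0:ℝ), vinner (response G G' (shift H s)) (Hd s)

/-- A differentiable history: locally absolutely continuous with derivative
`Hd ∈ L¹`. -/
structure IsDiffHistory {k : ℕ} (H Hd : ℝ → V k) : Prop where
  hist : IsHistory H
  integrable : IntegrableOn Hd (Set.Ici 0)
  ftc : ∀ t : ℝ, 0 ≤ t → H t = H 0 + ∫ s in Set.Icc (0:ℝ) t, Hd s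

/-- A differentiable process of duration `p` with derivative `Kd`. -/
structure IsDiffProcess {k : ℕ} (p : ℝ) (K Kd : ℝ → V k) : Prop where
  pos : 0 < p
  integrable : IntegrableOn Kd (Set.Icc 0 p)
  ftc : ∀ t : ℝ, 0 ≤ t → t < p → K t = K 0 + ∫ s in Set.Icc (0:ℝ) t, Kd s

/-- The work over a prolongation: `w(K_p, H) := w(K_p∗H) − w(H)`. -/
def workP {k : ℕ} (G G' : ℝ → (V k →L[ℝ] V k)) (p : ℝ) (K Kd H Hd : ℝ → V k) : ℝ :=
  work G G' (prolong p K H) (prolong p Kd Hd) - work G G' H Hd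

/-- The relaxed work `w^r_{H'}(H)` from the differentiable history `H'`
(with derivative `H'd`) to the history `H`. -/
def relaxedWork {k : ℕ} (G G' : ℝ → (V k →L[ℝ] V k)) (H' H'd H : ℝ → V k) : EReal :=
  sInf { c : EReal | ∃ K Kd : ℝ → ℝ → V k,
    (∀ p : ℝ, 0 < p → IsDiffProcess p (K p) (Kd p) ∧ Prolongs p (K p) H') ∧
    Tendsto (fun p => hdist G' (prolong p (K p) H') H) atTop (𝓝 0) ∧
    c = Filter.liminf (fun p => ((workP G G' p (K p) (Kd p) H' H'd : ℝ) : EReal)) atTop }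

/-- `H` is `w`-approachable from `H'`: there is a family of processes prolonging `H'`
approaching `H` in the distance `d`, along which the work converges. -/
def WApproachable {k : ℕ} (G G' : ℝ → (V k →L[ℝ] V k)) (H' H'd H : ℝ → V k) : Prop :=
  ∃ K Kd : ℝ → ℝ → V k, ∃ L : ℝ,
    (∀ p : ℝ, 0 < p → IsDiffProcess p (K p) (Kd p) ∧ Prolongs p (K p) H') ∧
    Tendsto (fun p => hdist G' (prolong p (K p) H') H) atTop (𝓝 0) ∧
    Tendsto (fun p => workP G G' p (K p) (Kd p) H' H'd) atTop (𝓝 L)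

/-- `Q(v) := ½⟨G(∞)v, v⟩`. -/
def Qform {k : ℕ} (Ginf : V k →L[ℝ] V k) (v : V k) : ℝ := (1/2) * vinner (Ginf v) v

/-- The relaxation function is dissipative: `w(H) ≥ 0` for every differentiable
history with `H(∞) = 0`. -/
def DissipativeRelax {k : ℕ} (G G' : ℝ → (V k →L[ℝ] V k)) : Prop :=
  ∀ H Hd : ℝ → V k, IsDiffHistory H Hd → Tendsto H atTop (𝓝 (0 : V k)) →
    0 ≤ work G G' H Hd

/-- `w` satisfies the dissipation property along the history `H`. -/
def DissipationProperty {k : ℕ} (G G' : ℝ → (V k →L[ℝ] V k)) (H Hd : ℝ → V k) : Prop :=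
  ∀ ε : ℝ, 0 < ε → ∃ δ : ℝ, 0 < δ ∧
    ∀ p : ℝ, ∀ K Kd : ℝ → V k, IsDiffProcess p K Kd → Prolongs p K H →
      hdist G' (prolong p K H) H < ENNReal.ofReal δ → -ε < workP G G' p K Kd H Hd

/-- A free energy (lower potential for the work `w`). -/
def IsFreeEnergy {k : ℕ} (G G' : ℝ → (V k →L[ℝ] V k)) (ψ : (ℝ → V k) → EReal) : Prop :=
  ∀ H Hd H' H'd : ℝ → V k, IsDiffHistory H Hd → IsDiffHistory H' H'd →
    ∀ ε : ℝ, 0 < ε → ∃ δ : ℝ, 0 < δ ∧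
      ∀ p : ℝ, ∀ K Kd : ℝ → V k, IsDiffProcess p K Kd → Prolongs p K H' →
        hdist G' (prolong p K H') H < ENNReal.ofReal δ →
        ψ H - ψ H' < ((workP G G' p K Kd H' H'd + ε : ℝ) : EReal)

/-!
Subtracting the two responses leaves `G(0)(H(0) − H'(0)) + ∫₀^∞ Ġ(s)(H − H')(s) ds`. Since
translation is continuous in `L¹` and `H − H'` is bounded, this integral is the limit as `t ↘ 0`
of the integrals `∫₀^∞ Ġ(s+t)(H − H')(s) ds`, whose norms are at most `d(H,H')`. For equivalent histories,
prolonging both by the constant process `H(0)` of duration `t` shifts the history by `t`, so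
`Λ(K_t∗H) − Λ(K_t∗H') = ∫₀^∞ Ġ(s+t)(H − H')(s) ds`; equivalence makes this vanish for every `t`,
that is `d(H,H') = 0`.
-/

open Set

section Analysis

variable {E E' : Type*} [NormedAddCommGroup E] [NormedAddCommGroup E']

theorem stronglyMeasurable_of_continuousWithinAt_Ici {β : Type*} [TopologicalSpace β]
    [TopologicalSpace.PseudoMetrizableSpace β] {f : ℝ → β}
    (hf : ∀ x, ContinuousWithinAt f (Ici x) x) : StronglyMeasurable f := by
  -- `f` is the pointwise limit of its values at the grid points `⌈x (n+1)⌉ / (n+1) ↘ x`.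
  set u : ℕ → ℝ → ℝ := fun n x => ⌈x * (n + 1)⌉ / (n + 1)
  have hu_ge : ∀ n x, x ≤ u n x := fun n x => by
    rw [le_div_iff₀ (by positivity)]; exact Int.le_ceil _
  have hu_le : ∀ n x, u n x ≤ x + 1 / (n + 1) := fun n x => by
    rw [div_le_iff₀ (by positivity), add_mul, one_div_mul_cancel (by positivity)]
    exact (Int.ceil_lt_add_one _).le
  refine stronglyMeasurable_of_tendsto atTop (f := fun n x => f (u n x)) (fun n => ?_)
    (tendsto_pi_nhds.2 fun x => (hf x).tendsto.comp ?_)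
  · exact (StronglyMeasurable.of_discrete (f := fun m : ℤ => f (m / (n + 1)))).comp_measurable
      (measurable_id.mul_const _).ceil
  · refine tendsto_nhdsWithin_iff.2 ⟨?_, .of_forall fun n => hu_ge n x⟩
    refine tendsto_of_tendsto_of_tendsto_of_le_of_le tendsto_const_nhds ?_
      (hu_ge · x) (hu_le · x)
    simpa using tendsto_one_div_add_atTop_nhds_zero_nat.const_add x

theorem tendsto_integral_norm_comp_add_sub {g : ℝ → E} (hg : Integrable g) :
    Tendsto (fun t => ∫ x, ‖g (x + t) - g x‖) (𝓝 0) (𝓝 0) := by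
  have : Fact ((1 : ℝ≥0∞) ≠ ∞) := ⟨ENNReal.one_ne_top⟩
  set f : Lp E 1 (volume : Measure ℝ) := hg.toL1 g
  have hcont : Tendsto (fun t : ℝ => DomAddAct.mk t +ᵥ f) (𝓝 0) (𝓝 f) := by
    have hc : Continuous (fun t : ℝ => DomAddAct.mk t +ᵥ f) :=
      continuous_vadd.comp (DomAddAct.continuous_mk.prodMk continuous_const)
    simpa using hc.tendsto 0
  have hnorm : ∀ t, ‖(DomAddAct.mk t +ᵥ f) - f‖ = ∫ x, ‖g (x + t) - g x‖ := by
    intro t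
    rw [L1.norm_eq_integral_norm]
    refine integral_congr_ae ?_
    filter_upwards [Lp.coeFn_sub (DomAddAct.mk t +ᵥ f) f,
      DomAddAct.vadd_Lp_ae_eq (DomAddAct.mk t) f, hg.coeFn_toL1,
      (measurePreserving_add_left volume t).quasiMeasurePreserving.ae_eq hg.coeFn_toL1]
      with x h_sub h_vadd h_eq h_eq_add
    simp only [Function.comp_apply] at h_eq_add
    rw [h_sub, Pi.sub_apply, h_vadd, h_eq, Equiv.symm_apply_apply, vadd_eq_add, h_eq_add,
      add_comm]
  simpa only [hnorm] using tendsto_iff_norm_sub_tendsto_zero.mp hcont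

variable [NormedSpace ℝ E] [NormedSpace ℝ E']

theorem setIntegral_Ioi_comp_add_right (g : ℝ → E) (p : ℝ) :
    ∫ s in Ioi 0, g (s + p) = ∫ s in Ioi p, g s := by
  have h := (measurePreserving_add_right volume p).setIntegral_preimage_emb
    (measurableEmbedding_addRight p) g (Ioi p)
  rwa [preimage_add_const_Ioi, sub_self] at h

theorem tendsto_setIntegral_Ioi_apply_comp_add {G' : ℝ → E →L[ℝ] E'} {F : ℝ → E}
    {C : ℝ} (hG : IntegrableOn G' (Ioi 0)) (hF : AEStronglyMeasurable F (volume.restrict (Ioi 0)))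
    (hC : ∀ᵐ s ∂(volume.restrict (Ioi 0)), ‖F s‖ ≤ C) :
    Tendsto (fun t => ∫ s in Ioi 0, G' (s + t) (F s)) (𝓝[>] 0)
      (𝓝 (∫ s in Ioi 0, G' s (F s))) := by
  have hg : Integrable ((Ioi (0 : ℝ)).indicator G') :=
    (integrable_indicator_iff (f := G') measurableSet_Ioi).2 hG
  set g := (Ioi (0 : ℝ)).indicator G'
  set C' := max C 0
  have hC' : ∀ᵐ s ∂(volume.restrict (Ioi 0)), ‖F s‖ ≤ C' :=
    hC.mono fun _ hs => hs.trans (le_max_left _ _)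
  have hgF : ∀ t, IntegrableOn (fun s => g (s + t) (F s)) (Ioi 0) := fun t =>
    (ContinuousLinearMap.apply ℝ (E := E) E').integrable_of_bilin_of_bdd_left C' hF hC'
      (hg.comp_add_right t).integrableOn
  have key : ∀ t ∈ Ioi (0 : ℝ),
      ‖(∫ s in Ioi 0, G' (s + t) (F s)) - ∫ s in Ioi 0, G' s (F s)‖
        ≤ C' * ∫ x, ‖g (x + t) - g x‖ := by
    intro t (ht : 0 < t)
    have h_shift : ∫ s in Ioi 0, G' (s + t) (F s) = ∫ s in Ioi 0, g (s + t) (F s) :=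
      setIntegral_congr_fun measurableSet_Ioi fun s (hs : 0 < s) => by
        simp only [g, indicator_of_mem (mem_Ioi.2 (by linarith : 0 < s + t))]
    have h_zero : ∫ s in Ioi 0, G' s (F s) = ∫ s in Ioi 0, g (s + 0) (F s) :=
      setIntegral_congr_fun measurableSet_Ioi fun s (hs : 0 < s) => by
        simp only [g, add_zero, indicator_of_mem (mem_Ioi.2 hs)]
    rw [h_shift, h_zero, ← integral_sub (hgF t) (hgF 0)]
    calc ‖∫ s in Ioi 0, g (s + t) (F s) - g (s + 0) (F s)‖
        ≤ ∫ s in Ioi 0, ‖g (s + t) - g s‖ * C' := by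
          refine norm_integral_le_of_norm_le
            (((hg.comp_add_right t).sub hg).norm.integrableOn.mul_const _) ?_
          filter_upwards [hC'] with s hs
          rw [add_zero, ← sub_apply]
          exact (g (s + t) - g s).le_opNorm_of_le hs
      _ ≤ ∫ s, ‖g (s + t) - g s‖ * C' :=
          setIntegral_le_integral (((hg.comp_add_right t).sub hg).norm.mul_const _)
            (.of_forall fun _ => by positivity)
      _ = C' * ∫ x, ‖g (x + t) - g x‖ := by rw [integral_mul_const, mul_comm]
  rw [tendsto_iff_norm_sub_tendsto_zero]
  refine squeeze_zero' (.of_forall fun _ => norm_nonneg _)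
    (eventually_nhdsWithin_of_forall key) ?_
  simpa using ((tendsto_integral_norm_comp_add_sub hg).const_mul C').mono_left nhdsWithin_le_nhds

end Analysis

section StateSpace

variable {k : ℕ}

lemma vnorm_nonneg (v : V k) : 0 ≤ vnorm v := by
  unfold vnorm; positivity

lemma vnorm_add_le (v w : V k) : vnorm (v + w) ≤ vnorm v + vnorm w := by
  have h₁ := norm_add_le v.1 w.1
  have h₂ := norm_add_le v.2.1 w.2.1
  have h₃ := norm_add_le v.2.2 w.2.2
  simp only [vnorm, Prod.fst_add, Prod.snd_add]
  linarith

lemma norm_le_vnorm (v : V k) : ‖v‖ ≤ vnorm v := by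
  have h₁ := norm_nonneg v.1
  have h₂ := norm_nonneg v.2.1
  have h₃ := norm_nonneg v.2.2
  rw [Prod.norm_def, Prod.norm_def]
  unfold vnorm
  exact max_le (by linarith) (max_le (by linarith) (by linarith))

lemma vnorm_zero : vnorm (0 : V k) = 0 := by
  simp [vnorm]

lemma eq_zero_of_vnorm_nonpos {v : V k} (h : vnorm v ≤ 0) : v = 0 :=
  norm_le_zero_iff.1 ((norm_le_vnorm v).trans h)

lemma continuous_vnorm : Continuous (vnorm (k := k)) := by
  unfold vnorm; fun_prop

end StateSpace

structure IsBoundedRightContinuous {E : Type*} [NormedAddCommGroup E] (X : ℝ → E) : Prop where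
  bounded : ∃ C, ∀ s, 0 ≤ s → ‖X s‖ ≤ C
  rightCont : ∀ s, 0 ≤ s → ContinuousWithinAt X (Ici s) s

namespace IsBoundedRightContinuous

variable {E E' : Type*} [NormedAddCommGroup E] [NormedAddCommGroup E'] {X Y : ℝ → E}

theorem sub (hX : IsBoundedRightContinuous X) (hY : IsBoundedRightContinuous Y) :
    IsBoundedRightContinuous (X - Y) := by
  obtain ⟨C, hC⟩ := hX.bounded
  obtain ⟨D, hD⟩ := hY.bounded
  exact ⟨⟨C + D, fun s hs => (norm_sub_le _ _).trans (add_le_add (hC s hs) (hD s hs))⟩,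
    fun s hs => (hX.rightCont s hs).sub (hY.rightCont s hs)⟩

theorem aestronglyMeasurable (hX : IsBoundedRightContinuous X) :
    AEStronglyMeasurable X (volume.restrict (Ioi 0)) := by
  -- Freezing `X` at `X 0` on the negative axis makes it right-continuous everywhere.
  have h_meas : StronglyMeasurable fun s => X (max s 0) := by
    refine stronglyMeasurable_of_continuousWithinAt_Ici fun x => ?_
    rcases lt_or_ge x 0 with hx | hx
    · have h_const : (fun _ => X 0) =ᶠ[𝓝 x] fun s => X (max s 0) :=
        eventually_of_mem (Iio_mem_nhds hx) fun s (hs : s < 0) =>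
          congrArg X (max_eq_right hs.le).symm
      exact (continuousAt_const.congr h_const).continuousWithinAt
    · exact (hX.rightCont x hx).congr (fun s (hs : x ≤ s) => by rw [max_eq_left (hx.trans hs)])
        (by rw [max_eq_left hx])
  refine h_meas.aestronglyMeasurable.congr ?_
  filter_upwards [ae_restrict_mem measurableSet_Ioi] with s (hs : 0 < s)
  rw [max_eq_left hs.le]

theorem exists_ae_norm_le (hX : IsBoundedRightContinuous X) :
    ∃ C, ∀ᵐ s ∂(volume.restrict (Ioi 0)), ‖X s‖ ≤ C := by
  obtain ⟨C, hC⟩ := hX.bounded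
  exact ⟨C, (ae_restrict_mem measurableSet_Ioi).mono fun s (hs : 0 < s) => hC s hs.le⟩

variable [NormedSpace ℝ E] [NormedSpace ℝ E']

theorem integrableOn_apply {G' : ℝ → E →L[ℝ] E'} (hG : IntegrableOn G' (Ioi 0))
    (hX : IsBoundedRightContinuous X) : IntegrableOn (fun s => G' s (X s)) (Ioi 0) := by
  obtain ⟨C, hC⟩ := hX.exists_ae_norm_le
  exact (ContinuousLinearMap.apply ℝ (E := E) E').integrable_of_bilin_of_bdd_left C
    hX.aestronglyMeasurable hC hG

theorem tendsto_setIntegral_apply_comp_add {G' : ℝ → E →L[ℝ] E'}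
    (hG : IntegrableOn G' (Ioi 0)) (hX : IsBoundedRightContinuous X) :
    Tendsto (fun t => ∫ s in Ioi 0, G' (s + t) (X s)) (𝓝[>] 0)
      (𝓝 (∫ s in Ioi 0, G' s (X s))) := by
  obtain ⟨C, hC⟩ := hX.exists_ae_norm_le
  exact tendsto_setIntegral_Ioi_apply_comp_add hG hX.aestronglyMeasurable hC

end IsBoundedRightContinuous

section Response

variable {k : ℕ}

theorem IsHistory.isBoundedRightContinuous {H : ℝ → V k} (hH : IsHistory H) :
    IsBoundedRightContinuous H := by
  obtain ⟨C, hC⟩ := hH.bounded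
  exact ⟨⟨C, fun s hs => (norm_le_vnorm _).trans (hC s hs)⟩, hH.rightCont⟩

theorem IsBoundedRightContinuous.prolong_const {X : ℝ → V k} (hX : IsBoundedRightContinuous X)
    (p : ℝ) (a : V k) : IsBoundedRightContinuous (prolong p (fun _ => a) X) := by
  obtain ⟨C, hC⟩ := hX.bounded
  refine ⟨⟨max ‖a‖ C, fun s _ => ?_⟩, fun s hs => ?_⟩
  · unfold prolong
    split_ifs with hsp
    · exact le_max_left _ _
    · exact (hC _ (by linarith [not_lt.1 hsp])).trans (le_max_right _ _)
  · rcases lt_or_ge s p with hsp | hsp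
    · have h_const : (fun _ => a) =ᶠ[𝓝 s] prolong p (fun _ => a) X :=
        eventually_of_mem (Iio_mem_nhds hsp) fun y (hy : y < p) => (if_pos hy).symm
      exact (continuousAt_const.congr h_const).continuousWithinAt
    · have h_shift : ContinuousWithinAt (fun y => X (y - p)) (Ici s) s :=
        (hX.rightCont (s - p) (by linarith)).comp (f := fun y => y - p)
          (continuous_sub_right p).continuousWithinAt
          fun y (hy : s ≤ y) => show s - p ≤ y - p by linarith
      exact h_shift.congr (fun y (hy : s ≤ y) => if_neg (not_lt.2 (hsp.trans hy)))
        (if_neg (not_lt.2 hsp))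

variable {G G' : ℝ → (V k →L[ℝ] V k)} {H H' : ℝ → V k}

theorem response_sub_response (hG : IntegrableOn G' (Ioi 0))
    (hH : IsBoundedRightContinuous H) (hH' : IsBoundedRightContinuous H') :
    response G G' H - response G G' H' =
      G 0 (H 0 - H' 0) + ∫ s in Ioi 0, G' s (H s - H' s) := by
  simp only [response, map_sub]
  rw [integral_sub (hH.integrableOn_apply hG) (hH'.integrableOn_apply hG)]
  abel

theorem ofReal_vnorm_integral_le_hdist (hG : IntegrableOn G' (Ioi 0))
    (hH : IsBoundedRightContinuous (H - H')) :
    ENNReal.ofReal (vnorm (∫ s in Ioi 0, G' s (H s - H' s))) ≤ hdist G' H H' := by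
  have h_lim := ((ENNReal.continuous_ofReal.comp continuous_vnorm).tendsto _).comp
    (hH.tendsto_setIntegral_apply_comp_add hG)
  refine le_of_tendsto h_lim ?_
  filter_upwards [self_mem_nhdsWithin] with t (ht : 0 < t)
  exact le_iSup_of_le (⟨t, ht⟩ : Ioi (0 : ℝ)) le_rfl

theorem ofReal_vnorm_response_sub_le (hG : IntegrableOn G' (Ioi 0))
    (hH : IsBoundedRightContinuous H) (hH' : IsBoundedRightContinuous H') :
    ENNReal.ofReal (vnorm (response G G' H - response G G' H')) ≤
      hdist G' H H' + ENNReal.ofReal (vnorm ((G 0) (H 0 - H' 0))) := by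
  rw [response_sub_response hG hH hH', add_comm (hdist G' H H')]
  calc ENNReal.ofReal (vnorm (G 0 (H 0 - H' 0) + ∫ s in Ioi 0, G' s (H s - H' s)))
      ≤ ENNReal.ofReal (vnorm (G 0 (H 0 - H' 0)) + vnorm (∫ s in Ioi 0, G' s (H s - H' s))) :=
        ENNReal.ofReal_le_ofReal (vnorm_add_le _ _)
    _ = ENNReal.ofReal (vnorm (G 0 (H 0 - H' 0)))
          + ENNReal.ofReal (vnorm (∫ s in Ioi 0, G' s (H s - H' s))) :=
        ENNReal.ofReal_add (vnorm_nonneg _) (vnorm_nonneg _)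
    _ ≤ _ := by gcongr; exact ofReal_vnorm_integral_le_hdist hG (hH.sub hH')

theorem response_eq_of_hdist_eq_zero (hG : IntegrableOn G' (Ioi 0))
    (hH : IsBoundedRightContinuous H) (hH' : IsBoundedRightContinuous H')
    (hd : hdist G' H H' = 0) (h0 : H 0 = H' 0) : response G G' H = response G G' H' := by
  have h := ofReal_vnorm_response_sub_le (G := G) hG hH hH'
  rw [hd, h0, sub_self, map_zero, vnorm_zero, ENNReal.ofReal_zero, add_zero,
    nonpos_iff_eq_zero, ENNReal.ofReal_eq_zero] at h
  exact sub_eq_zero.1 (eq_zero_of_vnorm_nonpos h)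

theorem response_prolong_sub_response_prolong (hG : IntegrableOn G' (Ioi 0))
    (hH : IsBoundedRightContinuous H) (hH' : IsBoundedRightContinuous H')
    {p : ℝ} (hp : 0 < p) (a : V k) :
    response G G' (prolong p (fun _ => a) H) - response G G' (prolong p (fun _ => a) H') =
      ∫ s in Ioi 0, G' (s + p) (H s - H' s) := by
  rw [response_sub_response hG (hH.prolong_const p a) (hH'.prolong_const p a)]
  have h_start : prolong p (fun _ => a) H 0 - prolong p (fun _ => a) H' 0 = 0 := by
    simp [prolong, hp]
  have h_tail : ∀ s, G' s (prolong p (fun _ => a) H s - prolong p (fun _ => a) H' s) =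
      (Ici p).indicator (fun s => G' s (H (s - p) - H' (s - p))) s := by
    intro s
    by_cases hsp : s < p
    · simp [prolong, hsp]
    · simp [prolong, hsp, not_lt.1 hsp]
  simp_rw [h_start, map_zero, zero_add, h_tail]
  rw [setIntegral_indicator measurableSet_Ici, inter_eq_right.2 (Ici_subset_Ioi.2 hp),
    integral_Ici_eq_integral_Ioi, ← setIntegral_Ioi_comp_add_right]
  simp only [add_sub_cancel_right]

theorem hdist_eq_zero_of_equivHist (hG : IntegrableOn G' (Ioi 0))
    (hH : IsBoundedRightContinuous H) (hH' : IsBoundedRightContinuous H')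
    (hE : EquivHist G G' H H') : hdist G' H H' = 0 := by
  refine ENNReal.iSup_eq_zero.2 fun ⟨t, (ht : 0 < t)⟩ => ?_
  rw [← response_prolong_sub_response_prolong hG hH hH' ht (H 0),
    hE.2 t ht _ tendsto_const_nhds, sub_self, vnorm_zero, ENNReal.ofReal_zero]

end Response

/-- `‖Λ(H) − Λ(H')‖ ≤ d(H,H') + ‖G(0)(H(0) − H'(0))‖`; consequently,
if `d(H,H') = 0` and `H(0) = H'(0)` — in particular if `H` and `H'` are equivalent —
then the stress, the self-action and the microstress (the three block components of
the response) coincide on `H` and `H'`. -/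
theorem response_estimate_and_state {k : ℕ} (G G' : ℝ → (V k →L[ℝ] V k))
    (hG : IsRelaxation G G') (H H' : ℝ → V k)
    (hH : IsHistory H) (hH' : IsHistory H') :
    (ENNReal.ofReal (vnorm (response G G' H - response G G' H')) ≤
      hdist G' H H' + ENNReal.ofReal (vnorm ((G 0) (H 0 - H' 0)))) ∧
    (hdist G' H H' = 0 → H 0 = H' 0 →
      (response G G' H).1 = (response G G' H').1 ∧
      (response G G' H).2.1 = (response G G' H').2.1 ∧
      (response G G' H).2.2 = (response G G' H').2.2) ∧
    (EquivHist G G' H H' →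
      (response G G' H).1 = (response G G' H').1 ∧
      (response G G' H).2.1 = (response G G' H').2.1 ∧
      (response G G' H).2.2 = (response G G' H').2.2) := by
  have hG' : IntegrableOn G' (Ioi 0) := hG.integrable.mono_set Ioi_subset_Ici_self
  have hX := hH.isBoundedRightContinuous
  have hX' := hH'.isBoundedRightContinuous
  have h_eq := response_eq_of_hdist_eq_zero (G := G) hG' hX hX'
  refine ⟨ofReal_vnorm_response_sub_le hG' hX hX', fun hd h0 => ?_, fun hE => ?_⟩
  · rw [h_eq hd h0]; exact ⟨rfl, rfl, rfl⟩
  · rw [h_eq (hdist_eq_zero_of_equivHist hG' hX hX' hE) hE.1]; exact ⟨rfl, rfl, rfl⟩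
end
end

section
/- (Fading memory) If ‖H(s)‖ ≤ M and ‖H'(s)‖ ≤ M for all s ≥ 0, then for every p > 0 and every process K_p of duration p prolonging both H and H', d(K_p∗H, K_p∗H') ≤ 2M ∫_p^∞ ‖Ġ(s)‖_op ds. In particular, for every ε > 0 there exists r > 0 such that d(K_p∗H, K_p∗H') < ε for every p > r and every such process K_p. -/
open MeasureTheory Filter Topology
open scoped ENNReal Classical

noncomputable section

/-!
On `[0, p)` both prolongations equal `K`, so the integrand defining `d` vanishes there; beyond `p`
the difference `H(s - p) - H'(s - p)` has norm at most `2M`, and after the substitution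
`u = s + t` it is integrated against `Ġ(u)` over `u ≥ p + t > p`. The tails `∫_p^∞ ‖Ġ‖_op` of
the integrable function `‖Ġ‖_op` tend to `0` as `p → ∞`.
-/

open Set

/-- `vnorm` is the norm of the `ℓ¹`-product of the three Euclidean factors, whereas the product
norm Mathlib puts on `V k` is the sup norm. -/
abbrev VL1 (k : ℕ) :=
  WithLp 1 (EuclideanSpace ℝ (Fin 3 × Fin 3) ×
    WithLp 1 (EuclideanSpace ℝ (Fin k) × EuclideanSpace ℝ (Fin k × Fin 3)))

variable {k : ℕ}

def toVL1 : V k ≃L[ℝ] VL1 k :=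
  ((ContinuousLinearEquiv.refl ℝ _).prodCongr
    (WithLp.prodContinuousLinearEquiv 1 ℝ _ _).symm).trans
    (WithLp.prodContinuousLinearEquiv 1 ℝ _ _).symm

lemma vnorm_eq_norm_toVL1 (v : V k) : vnorm v = ‖toVL1 v‖ := by
  simp [vnorm, toVL1, WithLp.prod_norm_eq_of_L1, add_assoc]

lemma opnorm_eq_norm_arrowCongr (A : V k →L[ℝ] V k) :
    opnorm A = ‖toVL1.arrowCongr toVL1 A‖ := by
  rw [← ContinuousLinearMap.sSup_unitClosedBall_eq_norm]
  have hball : {v : V k | vnorm v ≤ 1} = toVL1.symm '' Metric.closedBall 0 1 := by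
    ext v
    simp [toVL1.image_symm_eq_preimage, vnorm_eq_norm_toVL1]
  rw [opnorm, hball, Set.image_image]
  simp only [vnorm_eq_norm_toVL1, ContinuousLinearEquiv.arrowCongr_apply]

lemma opnorm_nonneg (A : V k →L[ℝ] V k) : 0 ≤ opnorm A := by
  rw [opnorm_eq_norm_arrowCongr]; exact norm_nonneg _

lemma vnorm_sub_le (v w : V k) : vnorm (v - w) ≤ vnorm v + vnorm w := by
  simpa only [vnorm_eq_norm_toVL1, map_sub] using norm_sub_le (toVL1 v) (toVL1 w)

lemma vnorm_apply_le (A : V k →L[ℝ] V k) (v : V k) : vnorm (A v) ≤ opnorm A * vnorm v := by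
  simpa [vnorm_eq_norm_toVL1, opnorm_eq_norm_arrowCongr] using
    (toVL1.arrowCongr toVL1 A).le_opNorm (toVL1 v)

lemma vnorm_integral_le_of_vnorm_le {α : Type*} [MeasurableSpace α] {μ : Measure α}
    {f : α → V k} {g : α → ℝ} (hg : Integrable g μ) (hfg : ∀ᵐ x ∂μ, vnorm (f x) ≤ g x) :
    vnorm (∫ x, f x ∂μ) ≤ ∫ x, g x ∂μ := by
  rw [vnorm_eq_norm_toVL1, ← toVL1.integral_comp_comm]
  exact norm_integral_le_of_norm_le hg (by simpa only [vnorm_eq_norm_toVL1] using hfg)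

lemma MeasureTheory.Integrable.opnorm {α : Type*} [MeasurableSpace α] {μ : Measure α}
    {f : α → (V k →L[ℝ] V k)} (hf : Integrable f μ) : Integrable (fun x => opnorm (f x)) μ := by
  simp only [opnorm_eq_norm_arrowCongr]
  exact ((toVL1.arrowCongr toVL1 : (V k →L[ℝ] V k) ≃L[ℝ] _).toContinuousLinearMap.integrable_comp
    hf).norm

lemma setIntegral_Ici_comp_add_right {E : Type*} [NormedAddCommGroup E] [NormedSpace ℝ E]
    (f : ℝ → E) (a t : ℝ) : ∫ s in Ici a, f (s + t) = ∫ s in Ici (a + t), f s := by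
  have h := (measurePreserving_add_right volume t).setIntegral_preimage_emb
    (measurableEmbedding_addRight t) f (Ici (a + t))
  rwa [preimage_add_const_Ici, add_sub_cancel_right] at h

lemma tendsto_setIntegral_Ioi_atTop_zero {E : Type*} [NormedAddCommGroup E] [NormedSpace ℝ E]
    {f : ℝ → E} {a : ℝ} (hf : IntegrableOn f (Ioi a)) :
    Tendsto (fun p => ∫ s in Ioi p, f s) atTop (𝓝 0) := by
  have hempty : ⋂ p : ℝ, Ioi p = ∅ := iInter_eq_empty_iff.2 fun x => ⟨x, lt_irrefl x⟩
  simpa [hempty] using tendsto_setIntegral_of_antitone (fun _ => measurableSet_Ioi)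
    (fun _ _ h => Ioi_subset_Ioi h) ⟨a, hf⟩

lemma prolong_of_lt {p s : ℝ} (K H : ℝ → V k) (hs : s < p) : prolong p K H s = K s :=
  if_pos hs

lemma prolong_of_le {p s : ℝ} (K H : ℝ → V k) (hs : p ≤ s) : prolong p K H s = H (s - p) :=
  if_neg (not_lt.2 hs)

section Prolongation

variable {M p : ℝ} {H H' : ℝ → V k}
  (hbH : ∀ s : ℝ, 0 ≤ s → vnorm (H s) ≤ M) (hbH' : ∀ s : ℝ, 0 ≤ s → vnorm (H' s) ≤ M)
include hbH hbH'

lemma vnorm_prolong_sub_prolong_le (K : ℝ → V k) {s : ℝ} (hs : p ≤ s) :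
    vnorm (prolong p K H s - prolong p K H' s) ≤ 2 * M := by
  rw [prolong_of_le K H hs, prolong_of_le K H' hs]
  linarith [vnorm_sub_le (H (s - p)) (H' (s - p)), hbH (s - p) (sub_nonneg.2 hs),
    hbH' (s - p) (sub_nonneg.2 hs)]

lemma vnorm_integral_prolong_sub_le (G' : ℝ → (V k →L[ℝ] V k))
    (hG' : IntegrableOn (fun s => opnorm (G' s)) (Ioi p)) (hp : 0 < p) {t : ℝ} (ht : 0 < t)
    (K : ℝ → V k) :
    vnorm (∫ s in Ioi 0, G' (s + t) (prolong p K H s - prolong p K H' s)) ≤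
      2 * M * ∫ s in Ioi p, opnorm (G' s) := by
  set D := fun s => prolong p K H s - prolong p K H' s
  have hM : 0 ≤ M := (vnorm_nonneg _).trans (hbH 0 le_rfl)
  have hD : ∀ u ∈ Ici (p + t), vnorm (G' u (D (u - t))) ≤ 2 * M * opnorm (G' u) := fun u hu =>
    calc vnorm (G' u (D (u - t))) ≤ opnorm (G' u) * vnorm (D (u - t)) := vnorm_apply_le _ _
      _ ≤ opnorm (G' u) * (2 * M) := by
        gcongr
        · exact opnorm_nonneg _
        · exact vnorm_prolong_sub_prolong_le hbH hbH' K (by linarith [mem_Ici.1 hu])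
      _ = 2 * M * opnorm (G' u) := mul_comm _ _
  calc vnorm (∫ s in Ioi 0, G' (s + t) (D s))
      = vnorm (∫ s in Ici p, G' (s + t) (D s)) := by
        rw [setIntegral_eq_of_subset_of_forall_sdiff_eq_zero measurableSet_Ioi
          (Ici_subset_Ioi.2 hp)]
        rintro s ⟨-, hs⟩
        simp [D, prolong_of_lt K _ (not_le.1 hs)]
    _ = vnorm (∫ u in Ici (p + t), G' u (D (u - t))) := by
        rw [← setIntegral_Ici_comp_add_right]
        simp only [add_sub_cancel_right]
    _ ≤ ∫ u in Ici (p + t), 2 * M * opnorm (G' u) :=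
        vnorm_integral_le_of_vnorm_le
          ((hG'.mono_set (Ici_subset_Ioi.2 (by linarith))).const_mul _)
          (ae_restrict_of_forall_mem measurableSet_Ici hD)
    _ ≤ 2 * M * ∫ s in Ioi p, opnorm (G' s) := by
        rw [integral_const_mul, integral_Ici_eq_integral_Ioi]
        gcongr
        exacts [ae_of_all _ fun s => opnorm_nonneg _, le_add_of_nonneg_right ht.le]

lemma hdist_prolong_le (G' : ℝ → (V k →L[ℝ] V k))
    (hG' : IntegrableOn (fun s => opnorm (G' s)) (Ioi p)) (hp : 0 < p) (K : ℝ → V k) :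
    hdist G' (prolong p K H) (prolong p K H') ≤
      ENNReal.ofReal (2 * M * ∫ s in Ioi p, opnorm (G' s)) :=
  iSup_le fun t => ENNReal.ofReal_le_ofReal <|
    vnorm_integral_prolong_sub_le hbH hbH' G' hG' hp t.2 K

end Prolongation

theorem hdist_fading_memory_general {k : ℕ} (G G' : ℝ → (V k →L[ℝ] V k))
    (hG : IsRelaxation G G') (M : ℝ) (H H' : ℝ → V k)
    (hbH : ∀ s : ℝ, 0 ≤ s → vnorm (H s) ≤ M)
    (hbH' : ∀ s : ℝ, 0 ≤ s → vnorm (H' s) ≤ M) :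
    (∀ p : ℝ, 0 < p → ∀ K : ℝ → V k, Prolongs p K H → Prolongs p K H' →
      hdist G' (prolong p K H) (prolong p K H') ≤
        ENNReal.ofReal (2 * M * ∫ s in Set.Ioi p, opnorm (G' s))) ∧
    (∀ ε : ℝ, 0 < ε → ∃ r : ℝ, 0 < r ∧
      ∀ p : ℝ, r < p → ∀ K : ℝ → V k, Prolongs p K H → Prolongs p K H' →
        hdist G' (prolong p K H) (prolong p K H') < ENNReal.ofReal ε) := by
  have hG' : IntegrableOn (fun s => opnorm (G' s)) (Ici 0) := hG.integrable.opnorm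
  have hbound : ∀ p : ℝ, 0 < p → ∀ K : ℝ → V k, hdist G' (prolong p K H) (prolong p K H') ≤
      ENNReal.ofReal (2 * M * ∫ s in Ioi p, opnorm (G' s)) := fun p hp K =>
    hdist_prolong_le hbH hbH' G' (hG'.mono_set (Ioi_subset_Ici hp.le)) hp K
  refine ⟨fun p hp K _ _ => hbound p hp K, fun ε hε => ?_⟩
  have htail : Tendsto (fun p => 2 * M * ∫ s in Ioi p, opnorm (G' s)) atTop (𝓝 0) := by
    simpa using (tendsto_setIntegral_Ioi_atTop_zero (hG'.mono_set Ioi_subset_Ici_self)).const_mul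
      (2 * M)
  obtain ⟨r, hr⟩ := eventually_atTop.1 (htail.eventually_lt_const hε)
  refine ⟨max r 1, by positivity, fun p hp K _ _ => ?_⟩
  have hp0 : 0 < p := lt_of_lt_of_le one_pos ((le_max_right r 1).trans hp.le)
  exact (hbound p hp0 K).trans_lt
    ((ENNReal.ofReal_lt_ofReal_iff hε).2 (hr p ((le_max_left r 1).trans hp.le)))

/-- Fading memory: if `‖H(s)‖ ≤ M` and `‖H'(s)‖ ≤ M` for all `s ≥ 0`,
then for every `p > 0` and every process `K` of duration `p` prolonging both,
`d(K∗H, K∗H') ≤ 2M ∫_p^∞ ‖Ġ(s)‖_op ds`; in particular for every `ε > 0` there is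
`r > 0` with `d(K∗H, K∗H') < ε` for every `p > r` and every such process. -/
theorem hdist_fading_memory {k : ℕ} (G G' : ℝ → (V k →L[ℝ] V k))
    (hG : IsRelaxation G G') (M : ℝ) (H H' : ℝ → V k)
    (hH : IsHistory H) (hH' : IsHistory H')
    (hbH : ∀ s : ℝ, 0 ≤ s → vnorm (H s) ≤ M)
    (hbH' : ∀ s : ℝ, 0 ≤ s → vnorm (H' s) ≤ M) :
    (∀ p : ℝ, 0 < p → ∀ K : ℝ → V k, Prolongs p K H → Prolongs p K H' →
      hdist G' (prolong p K H) (prolong p K H') ≤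
        ENNReal.ofReal (2 * M * ∫ s in Set.Ioi p, opnorm (G' s))) ∧
    (∀ ε : ℝ, 0 < ε → ∃ r : ℝ, 0 < r ∧
      ∀ p : ℝ, r < p → ∀ K : ℝ → V k, Prolongs p K H → Prolongs p K H' →
        hdist G' (prolong p K H) (prolong p K H') < ENNReal.ofReal ε) :=
  hdist_fading_memory_general G G' hG M H H' hbH hbH'
end
end

section
/- The work over prolongations is additive: for a differentiable history H, a differentiable process K of duration p with lim_{s↗p} K(s) = H(0), and a differentiable process K' of duration p' with lim_{s↗p'} K'(s) = K(0), one has w(K'∗K, H) = w(K', K∗H) + w(K, H), where K'∗K is the process of duration p + p' defined by (K'∗K)(s) := K'(s) for 0 ≤ s < p' and := K(s−p') for p' ≤ s < p + p'. Hence the work over a prolongation is additive with respect to prolongations (the first defining property of an action). -/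
open MeasureTheory Filter Topology
open scoped ENNReal Classical

noncomputable section

theorem prolong_prolong {k : ℕ} {p : ℝ} (hp : 0 ≤ p) (p' : ℝ) (A B C : ℝ → V k) :
    prolong (p + p') (prolong p' A B) C = prolong p' A (prolong p B C) := by
  funext s
  simp only [prolong]
  split_ifs <;> first | rfl | linarith | rw [sub_sub, add_comm p']

theorem workP_additive_general {k : ℕ} (G G' : ℝ → (V k →L[ℝ] V k))
    (H Hd : ℝ → V k)
    (p p' : ℝ) (K Kd K' K'd : ℝ → V k)
    (hK : IsDiffProcess p K Kd) :
    workP G G' (p + p') (prolong p' K' K) (prolong p' K'd Kd) H Hd =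
      workP G G' p' K' K'd (prolong p K H) (prolong p Kd Hd) +
        workP G G' p K Kd H Hd := by
  simp only [workP, prolong_prolong hK.pos.le]
  ring

/-- the work over prolongations is additive:
`w(K'∗K, H) = w(K', K∗H) + w(K, H)` (first defining property of an action). -/
theorem workP_additive {k : ℕ} (G G' : ℝ → (V k →L[ℝ] V k))
    (hG : IsRelaxation G G') (H Hd : ℝ → V k) (hH : IsDiffHistory H Hd)
    (p p' : ℝ) (K Kd K' K'd : ℝ → V k)
    (hK : IsDiffProcess p K Kd) (hK' : IsDiffProcess p' K' K'd)
    (hKH : Prolongs p K H) (hK'K : Tendsto K' (𝓝[<] p') (𝓝 (K 0))) :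
    workP G G' (p + p') (prolong p' K' K) (prolong p' K'd Kd) H Hd =
      workP G G' p' K' K'd (prolong p K H) (prolong p Kd Hd) +
        workP G G' p K Kd H Hd :=
  workP_additive_general G G' H Hd p p' K Kd K' K'd hK
end
end
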